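/- Let σ ∈ {0,1}^n have exactly one nonzero coordinate e, and let S₀ = {x : x_e = 0}. Suppose a partition {W₁,...,W_k} of {0,1}^n satisfies x ∈ W_i ⟹ x XOR σ ∈ W_i for all i. Then for any x ∈ W_i ∩ S₀ and any j, ∑_{y ∈ W_j} θ^{H(x,y)}(1−θ)^{n−H(x,y)} = ∑_{y ∈ W_j ∩ S₀} θ^{H'(x,y)}(1−θ)^{(n−1)−H'(x,y)}, where H denotes the Hamming distance on {0,1}^n and H' denotes the Hamming distance on the remaining n−1 coordinates (with coordinate e removed). -/
import Mathlib


open Finset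

/-- Hamming distance on the coordinates other than `e`. -/
def hammingDistAway {n : ℕ} (e : Fin n) (x y : Fin n → Bool) : ℕ :=
  (Finset.univ.filter (fun i : Fin n => i ≠ e ∧ x i ≠ y i)).card

/-- A superfluous edge can be removed: the full-cube transition mass from a state
`x` with `x e = false` into a σ-closed block `W` equals the (n−1)-dimensional
transition mass into `W ∩ S₀`. -/
theorem superfluous_edge_removal (n : ℕ) (θ : ℝ) (hθ : θ ∈ Set.Icc (0:ℝ) 1)
    (e : Fin n) (W : Finset (Fin n → Bool))
    (hW : ∀ x ∈ W, (fun i => xor (x i) (if i = e then true else false)) ∈ W)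
    (x : Fin n → Bool) (hx : x e = false) :
    ∑ y ∈ W, θ ^ (hammingDist x y) * (1 - θ) ^ (n - hammingDist x y) =
      ∑ y ∈ W.filter (fun y => y e = false),
        θ ^ (hammingDistAway e x y) * (1 - θ) ^ ((n - 1) - hammingDistAway e x y) := by
  classical
  set f : (Fin n → Bool) → (Fin n → Bool) :=
    fun y i => xor (y i) (if i = e then true else false) with hf
  have hinv : ∀ y, f (f y) = y := by
    intro y; funext i; simp [hf, Bool.xor_assoc]
  have hfe : ∀ y : Fin n → Bool, f y e = ! (y e) := by intro y; simp [hf]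
  have hfne : ∀ (y : Fin n → Bool) (i : Fin n), i ≠ e → f y i = y i := by
    intro y i hi; simp [hf, hi]
  have hWf : ∀ y ∈ W, f y ∈ W := hW
  -- key distance facts for y with y e = false
  have hd1 : ∀ y : Fin n → Bool, y e = false → hammingDist x y = hammingDistAway e x y := by
    intro y hy
    unfold hammingDistAway
    rw [hammingDist]
    congr 1
    apply Finset.filter_congr
    intro i _
    constructor
    · intro h
      refine ⟨?_, h⟩
      rintro rfl
      exact h (hx.trans hy.symm)
    · exact fun h => h.2
  have hd2 : ∀ y : Fin n → Bool, y e = false →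
      hammingDist x (f y) = hammingDistAway e x y + 1 := by
    intro y hy
    unfold hammingDistAway
    rw [hammingDist]
    have hset : (Finset.univ.filter (fun i : Fin n => x i ≠ f y i))
        = insert e (Finset.univ.filter (fun i : Fin n => i ≠ e ∧ x i ≠ y i)) := by
      ext i
      simp only [Finset.mem_filter, Finset.mem_univ, true_and, Finset.mem_insert]
      by_cases hi : i = e
      · subst hi
        simp [hfe, hx, hy]
      · rw [hfne y i hi]
        simp [hi]
    rw [hset, Finset.card_insert_of_notMem (by simp)]
  have hle : ∀ y : Fin n → Bool, hammingDistAway e x y ≤ n - 1 := by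
    intro y
    unfold hammingDistAway
    calc (Finset.univ.filter (fun i : Fin n => i ≠ e ∧ x i ≠ y i)).card
        ≤ (Finset.univ.erase e).card := by
          apply Finset.card_le_card
          intro i hi
          simp only [Finset.mem_filter, Finset.mem_univ, true_and] at hi
          exact Finset.mem_erase.mpr ⟨hi.1, Finset.mem_univ i⟩
      _ = n - 1 := by
          rw [Finset.card_erase_of_mem (Finset.mem_univ e)]
          simp
  -- split sum
  rw [← Finset.sum_filter_add_sum_filter_not W (fun y => y e = false)]
  have hbij : ∑ y ∈ W.filter (fun y => ¬ y e = false),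
      θ ^ (hammingDist x y) * (1 - θ) ^ (n - hammingDist x y)
      = ∑ y ∈ W.filter (fun y => y e = false),
      θ ^ (hammingDist x (f y)) * (1 - θ) ^ (n - hammingDist x (f y)) := by
    apply Finset.sum_nbij' (fun y => f y) (fun y => f y)
    · intro y hy
      simp only [Finset.mem_filter] at hy ⊢
      refine ⟨hWf y hy.1, ?_⟩
      rw [hfe]
      simpa using hy.2
    · intro y hy
      simp only [Finset.mem_filter] at hy ⊢
      refine ⟨hWf y hy.1, ?_⟩
      rw [hfe, hy.2]
      simp
    · intro y _; exact hinv y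
    · intro y _; exact hinv y
    · intro y _; rw [hinv]
  rw [hbij, ← Finset.sum_add_distrib]
  apply Finset.sum_congr rfl
  intro y hy
  simp only [Finset.mem_filter] at hy
  have hye : y e = false := hy.2
  rw [hd1 y hye, hd2 y hye]
  have hdn : hammingDistAway e x y ≤ n - 1 := hle y
  have hn : 1 ≤ n := e.pos
  set d := hammingDistAway e x y with hd
  have h1 : n - d = (n - 1 - d) + 1 := by omega
  have h2 : n - (d + 1) = n - 1 - d := by omega
  rw [h1, h2, pow_succ]
  ring
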